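/- arXiv:1804.07149 — 3 statements merged into one kernel-verified Lean document; each statement's English description precedes it below -/
import Mathlib

section
/- Let μ(λ) = -(λη - ξ - ∑_{i=1}^N b_i²/(λ - c_i)) with η > 0, b_i > 0, and c_1 < ... < c_N. Then μ is a rational function of negative type: its reciprocal 1/μ admits a representation 1/μ(λ) = σ - ∑_{i=1}^{N'} β_i²/(λ - γ_i) for some σ ∈ ℝ, some N' ≥ 1, real numbers γ_1 < ... < γ_{N'}, and β_i > 0. -/
/-!
Clearing denominators, `μ = P / A` with `A = ∏ (X - cᵢ)` and `P` a polynomial of degree `N + 1`.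
At `cᵢ` one has `P(cᵢ) = bᵢ² ∏_{k ≠ i} (cᵢ - c_k)`, while `μ → +∞` at `-∞` and `μ → -∞` at `+∞`;
so `P` alternates in sign along `t < c₁ < ⋯ < c_N < t'` and has `N + 1` simple real roots `γⱼ`,
none of them a pole. As `deg A < deg P`, Lagrange interpolation of `A` at the `γⱼ` gives
`A / P = ∑ A(γⱼ) / (P'(γⱼ) (λ - γⱼ))`, and differentiating `P = μ A` at a root of `μ` gives
`P'(γⱼ) = μ'(γⱼ) A(γⱼ)`. Hence `1 / μ(λ) = ∑ 1 / (μ'(γⱼ) (λ - γⱼ))`, i.e. `σ = 0` and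
`βⱼ² = -1 / μ'(γⱼ)`, which is positive because `μ' = -(η + ∑ bᵢ² / (λ - cᵢ)²) < 0`.
-/

open Polynomial Finset Filter Topology Lagrange

theorem Lagrange.eq_C_leadingCoeff_mul_nodal {F ι : Type*} [Field F] {s : Finset ι} {v : ι → F}
    {p : F[X]} (hvs : Set.InjOn v s) (hp : p.degree = #s) (hroot : ∀ i ∈ s, p.eval (v i) = 0) :
    p = C p.leadingCoeff * nodal s v := by
  have hp0 : p ≠ 0 := by rintro rfl; simp at hp
  refine eq_of_degree_le_of_eval_index_eq s hvs hp.le ?_ ?_ fun i hi => ?_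
  · rw [degree_C_mul (leadingCoeff_ne_zero.2 hp0), degree_nodal, hp]
  · rw [leadingCoeff_mul, leadingCoeff_C, nodal_monic.leadingCoeff, mul_one]
  · rw [hroot i hi, eval_mul, eval_nodal_at_node hi, mul_zero]

theorem Polynomial.eval_eq_eval_mul_sum_div_derivative {F ι : Type*} [Field F] [DecidableEq ι]
    {s : Finset ι} {v : ι → F} {p f : F[X]} (hvs : Set.InjOn v s) (hp : p.degree = #s)
    (hroot : ∀ i ∈ s, p.eval (v i) = 0) (hf : f.degree < #s) {x : F} (hx : ∀ i ∈ s, x ≠ v i) :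
    f.eval x = p.eval x * ∑ i ∈ s, f.eval (v i) / (p.derivative.eval (v i) * (x - v i)) := by
  have ha : p.leadingCoeff ≠ 0 := leadingCoeff_ne_zero.2 (by rintro rfl; simp at hp)
  conv_lhs => rw [eq_interpolate hvs hf, eval_interpolate_not_at_node _ hx]
  rw [eq_C_leadingCoeff_mul_nodal hvs hp hroot]
  simp only [eval_mul, eval_C, derivative_mul, derivative_C, zero_mul, zero_add, mul_sum]
  refine sum_congr rfl fun i hi => ?_
  rw [nodalWeight_eq_eval_derivative_nodal hi]
  field_simp

section Sign

variable {R : Type*} [CommRing R] [LinearOrder R] [IsStrictOrderedRing R]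

theorem neg_one_pow_card_filter_neg_mul_prod_pos {ι : Type*} (s : Finset ι) {g : ι → R}
    (hg : ∀ k ∈ s, g k ≠ 0) : 0 < (-1) ^ #{k ∈ s | g k < 0} * ∏ k ∈ s, g k := by
  classical
  rw [← prod_filter_mul_prod_filter_not s (fun k => g k < 0), ← mul_assoc, ← prod_neg]
  refine mul_pos (prod_pos fun k hk => ?_) (prod_pos fun k hk => ?_)
  · simpa using (mem_filter.1 hk).2
  · obtain ⟨hks, hk⟩ := mem_filter.1 hk
    exact lt_of_le_of_ne (not_lt.1 hk) (hg k hks).symm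

theorem StrictMono.neg_one_pow_mul_prod_erase_sub_pos {N : ℕ} {c : Fin N → R}
    (hc : StrictMono c) (i : Fin N) :
    0 < (-1) ^ (N - 1 - i) * ∏ k ∈ univ.erase i, (c i - c k) := by
  have hneg : {k ∈ univ.erase i | c i - c k < 0} = Ioi i := by
    ext k
    simp only [mem_filter, mem_erase, mem_univ, and_true, mem_Ioi, sub_neg, hc.lt_iff_lt]
    exact ⟨And.right, fun h => ⟨h.ne', h⟩⟩
  have := neg_one_pow_card_filter_neg_mul_prod_pos (univ.erase i) (g := fun k => c i - c k)
    fun k hk => sub_ne_zero.2 (hc.injective.ne (mem_erase.1 hk).1.symm)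
  rwa [hneg, Fin.card_Ioi] at this

end Sign

theorem Fin.strictMono_snoc {α : Type*} [Preorder α] {n : ℕ} {f : Fin n → α} {a : α}
    (hf : StrictMono f) (ha : ∀ j, f j < a) : StrictMono (Fin.snoc f a : Fin (n + 1) → α) := by
  intro i j hij
  cases i using Fin.lastCases <;> cases j using Fin.lastCases
  · exact absurd hij (lt_irrefl _)
  · exact absurd hij (not_lt.2 (Fin.le_last _))
  · simpa using ha _
  · simpa using hf (by simpa using hij)

theorem exists_strictMono_zeros_of_alternating {n m : ℕ} {f : ℝ → ℝ} (hf : Continuous f)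
    {e : Fin (n + 2) → ℝ} (he : StrictMono e)
    (hsign : ∀ j : Fin (n + 2), 0 < (-1) ^ (m + j : ℕ) * f (e j)) :
    ∃ γ : Fin (n + 1) → ℝ, StrictMono γ ∧ ∀ j, f (γ j) = 0 := by
  have hzero : ∀ j : Fin (n + 1), ∃ x ∈ Set.Ioo (e j.castSucc) (e j.succ), f x = 0 := by
    intro j
    have hlt : e j.castSucc < e j.succ := he Fin.castSucc_lt_succ
    have h₁ := hsign j.castSucc
    have h₂ := hsign j.succ
    rw [Fin.val_castSucc] at h₁
    rw [Fin.val_succ, ← add_assoc, pow_succ, mul_neg_one, neg_mul] at h₂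
    have hsq : ((-1 : ℝ) ^ (m + j : ℕ)) ^ 2 = 1 := by
      rw [← pow_mul, mul_comm, pow_mul]; norm_num
    have hprod : f (e j.castSucc) * f (e j.succ) < 0 := by nlinarith [mul_pos h₁ h₂]
    rcases mul_neg_iff.1 hprod with ⟨hpos, hneg⟩ | ⟨hneg, hpos⟩
    · exact intermediate_value_Ioo' hlt.le hf.continuousOn ⟨hneg, hpos⟩
    · exact intermediate_value_Ioo hlt.le hf.continuousOn ⟨hneg, hpos⟩
  choose γ hγ hfγ using hzero
  refine ⟨γ, fun j k hjk => ?_, hfγ⟩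
  calc γ j < e j.succ := (hγ j).2
    _ ≤ e k.castSucc := he.monotone (Fin.succ_le_castSucc_iff.2 hjk)
    _ < γ k := (hγ k).1

noncomputable section

variable {ι : Type*} [Fintype ι] (η ξ : ℝ) (c b : ι → ℝ)

-- `μ`, its derivative `μ'`, and the numerator `P` of `μ = P / ∏ (X - cᵢ)`.

def negTypeFn (x : ℝ) : ℝ := -(x * η - ξ - ∑ i, b i ^ 2 / (x - c i))

def negTypeDeriv (x : ℝ) : ℝ := -(η + ∑ i, b i ^ 2 / (x - c i) ^ 2)

def negTypeNumer [DecidableEq ι] : ℝ[X] :=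
  (C ξ - C η * X) * nodal univ c + ∑ i, C (b i ^ 2) * nodal (univ.erase i) c

end

section NegType

variable {ι : Type*} [Fintype ι] {η ξ : ℝ} {c b : ι → ℝ}

theorem hasDerivAt_negTypeFn {x : ℝ} (hx : ∀ i, x ≠ c i) :
    HasDerivAt (negTypeFn η ξ c b) (negTypeDeriv η c b x) x := by
  have hterm : ∀ i, HasDerivAt (fun y => b i ^ 2 / (y - c i)) (-(b i ^ 2 / (x - c i) ^ 2)) x :=
    fun i => ((hasDerivAt_const x (b i ^ 2)).fun_div ((hasDerivAt_id' x).sub_const (c i))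
      (sub_ne_zero.2 (hx i))).congr_deriv (by ring)
  refine ((((hasDerivAt_id' x).mul_const η).sub_const ξ).sub
    (HasDerivAt.fun_sum (u := univ) fun i _ => hterm i)).neg.congr_deriv ?_
  simp [negTypeDeriv, sum_neg_distrib]

theorem negTypeDeriv_neg (hη : 0 < η) (x : ℝ) : negTypeDeriv η c b x < 0 :=
  neg_neg_of_pos (add_pos_of_pos_of_nonneg hη
    (sum_nonneg fun _ _ => div_nonneg (sq_nonneg _) (sq_nonneg _)))

theorem tendsto_negTypeFn_atTop (hη : 0 < η) : Tendsto (negTypeFn η ξ c b) atTop atBot := by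
  have hsum : Tendsto (fun x => ∑ i, b i ^ 2 / (x - c i)) atTop (𝓝 0) := by
    simpa [sub_eq_add_neg] using tendsto_finsetSum univ fun i _ =>
      tendsto_const_nhds.div_atTop (tendsto_atTop_add_const_right _ (-c i) tendsto_id)
  have hlin : Tendsto (fun x => ξ + -(x * η)) atTop atBot :=
    tendsto_atBot_add_const_left _ ξ
      (tendsto_neg_atTop_atBot.comp (tendsto_id.atTop_mul_const hη))
  convert hlin.atBot_add hsum using 1
  ext x; simp only [negTypeFn]; ring

theorem tendsto_negTypeFn_atBot (hη : 0 < η) : Tendsto (negTypeFn η ξ c b) atBot atTop := by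
  have hsum : Tendsto (fun x => ∑ i, b i ^ 2 / (x - c i)) atBot (𝓝 0) := by
    simpa [sub_eq_add_neg] using tendsto_finsetSum univ fun i _ =>
      tendsto_const_nhds.div_atBot (tendsto_atBot_add_const_right _ (-c i) tendsto_id)
  have hlin : Tendsto (fun x => ξ + -(x * η)) atBot atTop :=
    tendsto_atTop_add_const_left _ ξ
      (tendsto_neg_atBot_atTop.comp (tendsto_id.atBot_mul_const hη))
  convert hlin.atTop_add hsum using 1
  ext x; simp only [negTypeFn]; ring

variable [DecidableEq ι]

theorem eval_negTypeNumer {x : ℝ} (hx : ∀ i, x ≠ c i) :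
    (negTypeNumer η ξ c b).eval x = negTypeFn η ξ c b x * (nodal univ c).eval x := by
  have hterm : ∀ i, (nodal (univ.erase i) c).eval x = (nodal univ c).eval x / (x - c i) := by
    intro i
    rw [nodal_eq_mul_nodal_erase (mem_univ i), eval_mul, eval_sub, eval_X, eval_C,
      mul_div_cancel_left₀ _ (sub_ne_zero.2 (hx i))]
  simp only [negTypeNumer, negTypeFn, eval_add, eval_mul, eval_sub, eval_C, eval_X,
    eval_finsetSum, hterm, neg_sub, sub_mul, sum_mul, div_mul_eq_mul_div, mul_div_assoc]
  ring

theorem eval_negTypeNumer_node (i : ι) :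
    (negTypeNumer η ξ c b).eval (c i) = b i ^ 2 * (nodal (univ.erase i) c).eval (c i) := by
  simp only [negTypeNumer, eval_add, eval_mul, eval_finsetSum, eval_C,
    eval_nodal_at_node (mem_univ i), mul_zero, zero_add]
  refine sum_eq_single i (fun k _ hki => ?_) (by simp)
  rw [eval_nodal_at_node (mem_erase.2 ⟨Ne.symm hki, mem_univ i⟩), mul_zero]

theorem eval_negTypeNumer_node_ne_zero (hc : Function.Injective c) (hb : ∀ i, b i ≠ 0) (i : ι) :
    (negTypeNumer η ξ c b).eval (c i) ≠ 0 := by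
  rw [eval_negTypeNumer_node]
  exact mul_ne_zero (pow_ne_zero 2 (hb i)) (eval_nodal_not_at_node fun k hk =>
    hc.ne (mem_erase.1 hk).1.symm)

theorem degree_negTypeNumer (hη : η ≠ 0) :
    (negTypeNumer η ξ c b).degree = (Fintype.card ι + 1 : ℕ) := by
  have hlin : (C ξ - C η * X).degree = 1 := by
    rw [sub_eq_neg_add, ← neg_mul, ← C_neg, degree_linear (neg_ne_zero.2 hη)]
  have hmain : ((C ξ - C η * X) * nodal univ c).degree =
      ((Fintype.card ι + 1 : ℕ) : WithBot ℕ) := by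
    rw [degree_mul, hlin, degree_nodal, card_univ, add_comm]; rfl
  have hsum : (∑ i, C (b i ^ 2) * nodal (univ.erase i) c).degree <
      ((Fintype.card ι + 1 : ℕ) : WithBot ℕ) := by
    refine (degree_sum_le _ _).trans_lt
      ((Finset.sup_lt_iff (WithBot.bot_lt_coe _)).2 fun i _ => ?_)
    rw [← smul_eq_C_mul]
    refine (degree_smul_le _ _).trans_lt ?_
    rw [degree_nodal, card_erase_of_mem (mem_univ i), card_univ]
    exact_mod_cast (by omega : Fintype.card ι - 1 < Fintype.card ι + 1)
  unfold negTypeNumer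
  rw [degree_add_eq_left_of_degree_lt (hmain ▸ hsum), hmain]

theorem eval_derivative_negTypeNumer {x : ℝ} (hx : ∀ i, x ≠ c i)
    (h0 : negTypeFn η ξ c b x = 0) :
    (negTypeNumer η ξ c b).derivative.eval x = negTypeDeriv η c b x * (nodal univ c).eval x := by
  have heq : (fun y => (negTypeNumer η ξ c b).eval y) =ᶠ[𝓝 x]
      fun y => negTypeFn η ξ c b y * (nodal univ c).eval y := by
    filter_upwards [eventually_all.2 fun i => eventually_ne_nhds (hx i)] with y hy
    exact eval_negTypeNumer hy
  have := ((hasDerivAt_negTypeFn hx).mul ((nodal univ c).hasDerivAt x)).congr_of_eventuallyEq heq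
  rw [((negTypeNumer η ξ c b).hasDerivAt x).unique this, h0, zero_mul, add_zero]

theorem negTypeFn_mul_sum_inv_negTypeDeriv_div {κ : Type*} [Fintype κ] [DecidableEq κ]
    (hη : η ≠ 0) (hc : Function.Injective c) (hb : ∀ i, b i ≠ 0) {γ : κ → ℝ}
    (hγ : Function.Injective γ) (hcard : Fintype.card κ = Fintype.card ι + 1)
    (hroot : ∀ j, (negTypeNumer η ξ c b).eval (γ j) = 0) {x : ℝ} (hxc : ∀ i, x ≠ c i)
    (hxγ : ∀ j, x ≠ γ j) :
    negTypeFn η ξ c b x * ∑ j, (negTypeDeriv η c b (γ j))⁻¹ / (x - γ j) = 1 := by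
  have hA : ∀ y, (∀ i, y ≠ c i) → (nodal univ c).eval y ≠ 0 := fun y hy =>
    eval_nodal_not_at_node fun i _ => hy i
  have hγc : ∀ j i, γ j ≠ c i := fun j i h =>
    eval_negTypeNumer_node_ne_zero hc hb i (h ▸ hroot j)
  have hterm : ∀ j, (nodal univ c).eval (γ j) /
      ((negTypeNumer η ξ c b).derivative.eval (γ j) * (x - γ j)) =
      (negTypeDeriv η c b (γ j))⁻¹ / (x - γ j) := by
    intro j
    have h0 : negTypeFn η ξ c b (γ j) = 0 := by
      have := hroot j
      rw [eval_negTypeNumer (hγc j)] at this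
      exact (mul_eq_zero.1 this).resolve_right (hA _ (hγc j))
    rw [eval_derivative_negTypeNumer (hγc j) h0]
    field_simp [hA _ (hγc j)]
  have hpf := eval_eq_eval_mul_sum_div_derivative (f := nodal univ c)
    (p := negTypeNumer η ξ c b) (s := univ) (v := γ) hγ.injOn
    (by rw [degree_negTypeNumer hη, card_univ, hcard]) (fun j _ => hroot j)
    (by rw [degree_nodal, card_univ, card_univ, hcard]; exact_mod_cast Nat.lt_succ_self _)
    (fun j _ => hxγ j)
  rw [eval_negTypeNumer hxc, sum_congr rfl fun j _ => hterm j,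
    mul_comm _ ((nodal univ c).eval x), mul_assoc] at hpf
  exact (mul_eq_left₀ (hA x hxc)).1 hpf.symm

end NegType

theorem exists_strictMono_roots_negTypeNumer {N : ℕ} {η ξ : ℝ} {c b : Fin N → ℝ} (hη : 0 < η)
    (hc : StrictMono c) (hb : ∀ i, b i ≠ 0) :
    ∃ γ : Fin (N + 1) → ℝ, StrictMono γ ∧ ∀ j, (negTypeNumer η ξ c b).eval (γ j) = 0 := by
  obtain ⟨t, htc, ht⟩ : ∃ t, (∀ i, t < c i) ∧ 0 < negTypeFn η ξ c b t :=
    ((eventually_all.2 fun i => eventually_lt_atBot (c i)).and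
      ((tendsto_negTypeFn_atBot hη).eventually_gt_atTop 0)).exists
  obtain ⟨t', ⟨htt', htc'⟩, ht'⟩ : ∃ t', (t < t' ∧ ∀ i, c i < t') ∧ negTypeFn η ξ c b t' < 0 :=
    (((eventually_gt_atTop t).and (eventually_all.2 fun i => eventually_gt_atTop (c i))).and
      ((tendsto_negTypeFn_atTop hη).eventually_lt_atBot 0)).exists
  refine exists_strictMono_zeros_of_alternating (m := N) (negTypeNumer η ξ c b).continuous
    (e := Fin.snoc (Fin.cons t c : Fin (N + 1) → ℝ) t')
    (Fin.strictMono_snoc (Fin.strictMono_cons.2 ⟨htc, hc⟩) fun j => ?_) fun j => ?_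
  · cases j using Fin.cases with
    | zero => simpa using htt'
    | succ i => simpa using htc' i
  cases j using Fin.lastCases with
  | last =>
    have hsign : (-1 : ℝ) ^ (N + (N + 1)) = -1 := Odd.neg_one_pow ⟨N, by ring⟩
    simp only [Fin.snoc_last, Fin.val_last]
    rw [eval_negTypeNumer fun i => (htc' i).ne', eval_nodal, hsign, neg_one_mul, ← neg_mul]
    exact mul_pos (neg_pos.2 ht') (prod_pos fun i _ => sub_pos.2 (htc' i))
  | cast j =>
    cases j using Fin.cases with
    | zero =>
      have hsign : (-1 : ℝ) ^ N * ∏ i, (t - c i) = ∏ i, (c i - t) := by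
        simpa using (prod_neg (s := univ) fun i => t - c i).symm
      simp only [Fin.snoc_castSucc, Fin.cons_zero, Fin.val_castSucc, Fin.val_zero, add_zero]
      rw [eval_negTypeNumer fun i => (htc i).ne, eval_nodal, mul_left_comm, hsign]
      exact mul_pos ht (prod_pos fun i _ => sub_pos.2 (htc i))
    | succ i =>
      have hsign : (-1 : ℝ) ^ (N + (i + 1)) = (-1) ^ (N - 1 - i) := by
        rw [show N + (i + 1) = N - 1 - i + 2 * (i + 1) by omega, pow_add, pow_mul]; norm_num
      simp only [Fin.snoc_castSucc, Fin.cons_succ, Fin.val_castSucc, Fin.val_succ]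
      rw [eval_negTypeNumer_node, eval_nodal, hsign, mul_left_comm]
      exact mul_pos (sq_pos_of_ne_zero (hb i)) (hc.neg_one_pow_mul_prod_erase_sub_pos i)

/-- for `μ(λ) = -(λη - ξ - ∑ bᵢ²/(λ - cᵢ))` with `η > 0`, the reciprocal
`1/μ` has a representation `σ - ∑_{i=1}^{N'} βᵢ²/(λ - γᵢ)` with `γ₁ < ⋯ < γ_{N'}` and
`βᵢ > 0`, the identity being encoded as `μ(λ)·(σ - ∑ βᵢ²/(λ - γᵢ)) = 1` away from the
poles `cᵢ` and `γᵢ`. -/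
theorem stmt5 (N : ℕ) (η ξ : ℝ) (hη : 0 < η)
    (c : Fin N → ℝ) (hc : StrictMono c)
    (bb : Fin N → ℝ) (hb : ∀ i, 0 < bb i) :
    ∃ (N' : ℕ) (σ : ℝ) (γ β : Fin N' → ℝ),
      1 ≤ N' ∧ StrictMono γ ∧ (∀ i, 0 < β i) ∧
      ∀ lam : ℝ, (∀ i, lam ≠ c i) → (∀ i, lam ≠ γ i) →
        (-(lam * η - ξ - ∑ i, (bb i) ^ 2 / (lam - c i))) *
          (σ - ∑ i, (β i) ^ 2 / (lam - γ i)) = 1 := by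
  obtain ⟨γ, hγ, hroot⟩ := exists_strictMono_roots_negTypeNumer (ξ := ξ) hη hc fun i => (hb i).ne'
  have hweight : ∀ j, 0 < -(negTypeDeriv η c bb (γ j))⁻¹ := fun j =>
    neg_pos.2 (inv_lt_zero.2 (negTypeDeriv_neg hη _))
  refine ⟨N + 1, 0, γ, fun j => √(-(negTypeDeriv η c bb (γ j))⁻¹), by omega, hγ,
    fun j => Real.sqrt_pos.2 (hweight j), fun x hxc hxγ => ?_⟩
  simp only [Real.sq_sqrt (hweight _).le, neg_div, sum_neg_distrib, zero_sub, neg_neg]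
  exact negTypeFn_mul_sum_inv_negTypeDeriv_div hη.ne' hc.injective (fun i => (hb i).ne')
    hγ.injective (by simp) hroot hxc hxγ
end

section
/- Let H = L²(-a,b) ⊕ ℂ^{N'} ⊕ ℂ^{M'} with inner product ⟨Y,Z⟩ = ∫_{-a}^b y z̄ dx + ⟨y¹,z¹⟩ + ⟨y²,z²⟩. For F, G in the domain of L (so their functional components f, g satisfy the boundary conditions, the domain conditions -f(0⁺) + σΔ'f - ⟨f¹,β⟩ = 0 and f'(0⁻) - τΔf - ⟨f²,α⟩ = 0, and similarly for g), the boundary contributions cancel: f(0⁺)Δ'ḡ - ḡ(0⁺)Δ'f + ḡ'(0⁻)Δf - f'(0⁻)Δḡ = (f'ḡ - fḡ')(0⁻) - (f'ḡ - fḡ')(0⁺). Hence ⟨LF, G⟩ = ⟨F, LG⟩, i.e., L is symmetric. -/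
open MeasureTheory intervalIntegral ComplexConjugate

/-!
Since the weights and the diagonal entries are real, the finite-dimensional parts of
`⟨LF, G⟩ - ⟨F, LG⟩` collapse to `Δ'f ⟨β, g¹⟩ - Δ'ḡ ⟨f¹, β⟩` and `Δf ⟨α, g²⟩ - Δḡ ⟨f², α⟩`.
The domain conditions rewrite these pairings through the boundary values at `0`, and what
remains is exactly the negative of the Wronskian jump produced by the Lagrange identity.
-/

theorem sum_coupling_sub_sum_coupling {ι : Type*} [Fintype ι] (w d : ι → ℝ) (x y : ι → ℂ)
    (s t : ℂ) :
    (∑ i, ((w i : ℂ) * s + (d i : ℂ) * x i) * conj (y i)) -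
        ∑ i, x i * conj ((w i : ℂ) * t + (d i : ℂ) * y i) =
      s * conj (∑ i, y i * (w i : ℂ)) - conj t * ∑ i, x i * (w i : ℂ) := by
  rw [← Finset.sum_sub_distrib, map_sum, Finset.mul_sum, Finset.mul_sum,
    ← Finset.sum_sub_distrib]
  refine Finset.sum_congr rfl fun i _ => ?_
  simp only [map_add, map_mul, Complex.conj_ofReal]
  ring

theorem stmt12_general (a b : ℝ) (N' M' : ℕ) (σ τ : ℝ)
    (β γ : Fin N' → ℝ) (α δ : Fin M' → ℝ)
    (f g lf lg : ℝ → ℂ)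
    (f1 g1 : Fin N' → ℂ) (f2 g2 : Fin M' → ℂ)
    (f0m f0p f1m f1p g0m g0p g1m g1p : ℂ)
    (hdf1 : -f0p + σ * (f1p - f1m) - ∑ i, f1 i * (β i : ℂ) = 0)
    (hdf2 : f1m - τ * (f0p - f0m) - ∑ j, f2 j * (α j : ℂ) = 0)
    (hdg1 : -g0p + σ * (g1p - g1m) - ∑ i, g1 i * (β i : ℂ) = 0)
    (hdg2 : g1m - τ * (g0p - g0m) - ∑ j, g2 j * (α j : ℂ) = 0)
    (hLag : (∫ x in (-a)..b, lf x * starRingEnd ℂ (g x)) -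
        (∫ x in (-a)..b, f x * starRingEnd ℂ (lg x)) =
      (-(f1m * starRingEnd ℂ g0m) + f0m * starRingEnd ℂ g1m) +
        (f1p * starRingEnd ℂ g0p - f0p * starRingEnd ℂ g1p)) :
    (f0p * starRingEnd ℂ (g1p - g1m) - starRingEnd ℂ g0p * (f1p - f1m) +
        starRingEnd ℂ g1m * (f0p - f0m) - f1m * starRingEnd ℂ (g0p - g0m) =
      (f1m * starRingEnd ℂ g0m - f0m * starRingEnd ℂ g1m) -
        (f1p * starRingEnd ℂ g0p - f0p * starRingEnd ℂ g1p)) ∧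
    ((∫ x in (-a)..b, lf x * starRingEnd ℂ (g x)) +
        (∑ i, ((β i : ℂ) * (f1p - f1m) + (γ i : ℂ) * f1 i) * starRingEnd ℂ (g1 i)) +
        (∑ j, ((α j : ℂ) * (f0p - f0m) + (δ j : ℂ) * f2 j) * starRingEnd ℂ (g2 j)) =
      (∫ x in (-a)..b, f x * starRingEnd ℂ (lg x)) +
        (∑ i, f1 i * starRingEnd ℂ ((β i : ℂ) * (g1p - g1m) + (γ i : ℂ) * g1 i)) +
        (∑ j, f2 j * starRingEnd ℂ ((α j : ℂ) * (g0p - g0m) + (δ j : ℂ) * g2 j))) := by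
  refine ⟨by simp only [map_sub]; ring, ?_⟩
  have hg1 := congrArg conj (sub_eq_zero.mp hdg1).symm
  have hg2 := congrArg conj (sub_eq_zero.mp hdg2).symm
  simp only [map_neg, map_add, map_sub, map_mul, Complex.conj_ofReal] at hg1 hg2
  have hcoupleN := sum_coupling_sub_sum_coupling β γ f1 g1 (f1p - f1m) (g1p - g1m)
  have hcoupleM := sum_coupling_sub_sum_coupling α δ f2 g2 (f0p - f0m) (g0p - g0m)
  rw [map_sub] at hcoupleN hcoupleM
  linear_combination hLag + hcoupleN + hcoupleM +
    (f1p - f1m) * hg1 + (conj g1p - conj g1m) * hdf1 +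
    (f0p - f0m) * hg2 + (conj g0p - conj g0m) * hdf2

/-- for `F, G` in the domain of the block operator `L`, the boundary
contributions cancel and `⟨LF, G⟩ = ⟨F, LG⟩`, i.e. `L` is symmetric. Here `lf, lg`
denote `ℓf, ℓg`, the one-sided boundary values at `0` are listed explicitly, and the
Lagrange identity for the differential part is the hypothesis `hLag`. -/
theorem stmt12 (a b : ℝ) (N' M' : ℕ) (σ τ : ℝ)
    (β γ : Fin N' → ℝ) (α δ : Fin M' → ℝ)
    (hβ : ∀ i, 0 < β i) (hα : ∀ j, 0 < α j)
    (f g lf lg : ℝ → ℂ)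
    (f1 g1 : Fin N' → ℂ) (f2 g2 : Fin M' → ℂ)
    (f0m f0p f1m f1p g0m g0p g1m g1p : ℂ)
    (hdf1 : -f0p + σ * (f1p - f1m) - ∑ i, f1 i * (β i : ℂ) = 0)
    (hdf2 : f1m - τ * (f0p - f0m) - ∑ j, f2 j * (α j : ℂ) = 0)
    (hdg1 : -g0p + σ * (g1p - g1m) - ∑ i, g1 i * (β i : ℂ) = 0)
    (hdg2 : g1m - τ * (g0p - g0m) - ∑ j, g2 j * (α j : ℂ) = 0)
    (hLag : (∫ x in (-a)..b, lf x * starRingEnd ℂ (g x)) -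
        (∫ x in (-a)..b, f x * starRingEnd ℂ (lg x)) =
      (-(f1m * starRingEnd ℂ g0m) + f0m * starRingEnd ℂ g1m) +
        (f1p * starRingEnd ℂ g0p - f0p * starRingEnd ℂ g1p)) :
    (f0p * starRingEnd ℂ (g1p - g1m) - starRingEnd ℂ g0p * (f1p - f1m) +
        starRingEnd ℂ g1m * (f0p - f0m) - f1m * starRingEnd ℂ (g0p - g0m) =
      (f1m * starRingEnd ℂ g0m - f0m * starRingEnd ℂ g1m) -
        (f1p * starRingEnd ℂ g0p - f0p * starRingEnd ℂ g1p)) ∧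
    ((∫ x in (-a)..b, lf x * starRingEnd ℂ (g x)) +
        (∑ i, ((β i : ℂ) * (f1p - f1m) + (γ i : ℂ) * f1 i) * starRingEnd ℂ (g1 i)) +
        (∑ j, ((α j : ℂ) * (f0p - f0m) + (δ j : ℂ) * f2 j) * starRingEnd ℂ (g2 j)) =
      (∫ x in (-a)..b, f x * starRingEnd ℂ (lg x)) +
        (∑ i, f1 i * starRingEnd ℂ ((β i : ℂ) * (g1p - g1m) + (γ i : ℂ) * g1 i)) +
        (∑ j, f2 j * starRingEnd ℂ ((α j : ℂ) * (g0p - g0m) + (δ j : ℂ) * g2 j))) :=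
  stmt12_general a b N' M' σ τ β γ α δ f g lf lg f1 g1 f2 g2 f0m f0p f1m f1p g0m g0p g1m g1p hdf1
    hdf2 hdg1 hdg2 hLag
end

section
/- Let f¹, g¹ ∈ ℂ^{N'}, β ∈ ℝ^{N'}, γ a real diagonal N'×N' matrix, σ ∈ ℝ, and complex numbers f(0⁺), Δ'f, g(0⁺), Δ'g satisfying the domain conditions -f(0⁺) + σΔ'f - ⟨f¹,β⟩ = 0 and -g(0⁺) + σΔ'g - ⟨g¹,β⟩ = 0 (with real σ, β, γ). Then ⟨βΔ'f + γf¹, g¹⟩ - ⟨f¹, βΔ'g + γg¹⟩ = f(0⁺) Δ'ḡ - ḡ(0⁺) Δ'f. -/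
/-! The real diagonal `γ` cancels by symmetry, so the left side reduces to
`Δ'f · conj ⟨g¹, β⟩ - conj Δ'g · ⟨f¹, β⟩`; the two domain conditions rewrite the pairings
`⟨f¹, β⟩` and `⟨g¹, β⟩` in terms of boundary values, and the `σ Δ'f conj Δ'g` terms cancel. -/

open ComplexConjugate

section RealWeights

variable {ι : Type*} [Fintype ι]

theorem sum_ofReal_mul_mul_conj_comm (γ : ι → ℝ) (f g : ι → ℂ) :
    ∑ i, (γ i : ℂ) * f i * conj (g i) = ∑ i, f i * conj ((γ i : ℂ) * g i) := by
  refine Finset.sum_congr rfl fun i _ => ?_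
  rw [map_mul, Complex.conj_ofReal]
  ring

theorem sum_mul_conj_sub_sum_mul_conj_eq (β γ : ι → ℝ) (f g : ι → ℂ) (a b : ℂ) :
    (∑ i, ((β i : ℂ) * a + (γ i : ℂ) * f i) * conj (g i)) -
      (∑ i, f i * conj ((β i : ℂ) * b + (γ i : ℂ) * g i)) =
    a * conj (∑ i, g i * (β i : ℂ)) - conj b * ∑ i, f i * (β i : ℂ) := by
  have hβ : ∑ i, (β i : ℂ) * a * conj (g i) = a * conj (∑ i, g i * (β i : ℂ)) := by
    simp only [map_sum, map_mul, Complex.conj_ofReal, Finset.mul_sum]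
    exact Finset.sum_congr rfl fun i _ => by ring
  have hβ' : ∑ i, f i * conj ((β i : ℂ) * b) = conj b * ∑ i, f i * (β i : ℂ) := by
    simp only [map_mul, Complex.conj_ofReal, Finset.mul_sum]
    exact Finset.sum_congr rfl fun i _ => by ring
  simp only [add_mul, map_add, mul_add, Finset.sum_add_distrib]
  rw [hβ, hβ', sum_ofReal_mul_mul_conj_comm]
  ring

end RealWeights

/-- the first vector-component identity in the symmetry proof:
`⟨βΔ'f + γf¹, g¹⟩ - ⟨f¹, βΔ'g + γg¹⟩ = f(0⁺)Δ'ḡ - ḡ(0⁺)Δ'f`, given the domain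
conditions `-f(0⁺) + σΔ'f - ⟨f¹,β⟩ = 0` and `-g(0⁺) + σΔ'g - ⟨g¹,β⟩ = 0`. -/
theorem stmt13 (N' : ℕ) (β γ : Fin N' → ℝ) (σ : ℝ)
    (f1 g1 : Fin N' → ℂ) (f0p dpf g0p dpg : ℂ)
    (hf : -f0p + σ * dpf - ∑ i, f1 i * (β i : ℂ) = 0)
    (hg : -g0p + σ * dpg - ∑ i, g1 i * (β i : ℂ) = 0) :
    (∑ i, ((β i : ℂ) * dpf + (γ i : ℂ) * f1 i) * starRingEnd ℂ (g1 i)) -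
      (∑ i, f1 i * starRingEnd ℂ ((β i : ℂ) * dpg + (γ i : ℂ) * g1 i)) =
    f0p * starRingEnd ℂ dpg - starRingEnd ℂ g0p * dpf := by
  rw [sum_mul_conj_sub_sum_mul_conj_eq]
  have hg_conj := congrArg conj hg
  simp only [map_sub, map_add, map_neg, map_mul, Complex.conj_ofReal, map_zero] at hg_conj
  linear_combination -dpf * hg_conj + conj dpg * hf
end
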